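/- arXiv:1006.1775 — 2 statements merged into one kernel-verified Lean document; each statement's English description precedes it below -/
import Mathlib

section
/- Let u⁰, u¹ : ℂ → ℝ^{2n} satisfy |u^h(z)| ≤ C|z| + C'|z|² near 0, with du^h bounded by C in C⁰, and let second-order Taylor remainders be controlled. Define for 0 < γ < α < 1 and small r > 0 the map w_r(z) = β_{r^α, r^γ}(z) · u¹(r²/z) on the annulus A = {r^α < |z| < r^γ}, where β is the logarithmic cutoff. Then ‖d w_r‖_{C⁰(A)} ≤ C r^{2−2α} ( |ln r^{α−γ}|^{−1} + 1 ). In particular ‖dw_r‖_{C⁰(A)} → 0 as r → 0. -/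
/-! On the annulus `δ < |z| < ε` the cutoff equals `(log ε - log |z|) / (log ε - log δ)`, so it
lies in `[0, 1]` and its differential has norm at most `1 / (|z| log (ε / δ))`. Since `u¹(0) = 0`
and `‖du¹‖ ≤ C`, the mean value inequality gives `|u¹(w)| ≤ C |w|`, and the differential of
`z ↦ u¹(r² / z)` has norm at most `C r² / |z|²`. The product rule bounds `‖dw_r‖` by
`C r² / |z|² · (1 / log (ε / δ) + 1)`, and `r² / |z|² ≤ r^{2 - 2α}` because `|z| > r^α`. -/

/-- The logarithmic cutoff function `β_{δ,ε}`. -/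
noncomputable def logCutoff (δ ε : ℝ) (z : ℂ) : ℝ :=
  if ‖z‖ ≤ δ then 1
  else if ‖z‖ < ε then
    (Real.log ε - Real.log (‖z‖)) / (Real.log ε - Real.log δ)
  else 0

open Filter Topology Set

section Calculus

variable {E F : Type*} [NormedAddCommGroup E] [NormedSpace ℝ E]
  [NormedAddCommGroup F] [NormedSpace ℝ F]

theorem norm_le_mul_norm_of_norm_fderiv_le {f : E → F} {C : ℝ} (hf : Differentiable ℝ f)
    (hf0 : f 0 = 0) (hC : ∀ x, ‖fderiv ℝ f x‖ ≤ C) (x : E) : ‖f x‖ ≤ C * ‖x‖ := by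
  simpa [hf0] using convex_univ.norm_image_sub_le_of_norm_fderiv_le (fun y _ => hf y)
    (fun y _ => hC y) (mem_univ 0) (mem_univ x)

theorem norm_fderiv_smul_le {c : E → ℝ} {f : E → F} {x : E} (hc : DifferentiableAt ℝ c x)
    (hf : DifferentiableAt ℝ f x) :
    ‖fderiv ℝ (fun y => c y • f y) x‖ ≤ |c x| * ‖fderiv ℝ f x‖ + ‖fderiv ℝ c x‖ * ‖f x‖ := by
  calc ‖fderiv ℝ (fun y => c y • f y) x‖
      = ‖c x • fderiv ℝ f x + (fderiv ℝ c x).smulRight (f x)‖ := by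
        rw [← fderiv_smul hc hf]; rfl
    _ ≤ ‖c x • fderiv ℝ f x‖ + ‖(fderiv ℝ c x).smulRight (f x)‖ := norm_add_le _ _
    _ = |c x| * ‖fderiv ℝ f x‖ + ‖fderiv ℝ c x‖ * ‖f x‖ := by
        rw [norm_smul, Real.norm_eq_abs, ContinuousLinearMap.norm_smulRight_apply]

end Calculus

section LogNorm

variable {E : Type*} [NormedAddCommGroup E] [InnerProductSpace ℝ E] {x : E}

theorem hasFDerivAt_log_norm (hx : x ≠ 0) :
    HasFDerivAt (fun y => Real.log ‖y‖) (‖x‖⁻¹ • fderiv ℝ (fun y => ‖y‖) x) x :=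
  (Real.hasDerivAt_log (norm_ne_zero_iff.2 hx)).comp_hasFDerivAt x
    (differentiableAt_id.norm ℝ hx).hasFDerivAt

theorem norm_fderiv_log_norm_le (hx : x ≠ 0) :
    ‖fderiv ℝ (fun y => Real.log ‖y‖) x‖ ≤ ‖x‖⁻¹ := by
  rw [(hasFDerivAt_log_norm hx).fderiv, norm_smul, norm_inv, norm_norm]
  exact mul_le_of_le_one_right (by positivity)
    (by simpa using norm_fderiv_le_of_lipschitz ℝ lipschitzWith_one_norm (x₀ := x))

end LogNorm

section LogCutoff

variable {δ ε : ℝ} {z : ℂ}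

theorem logCutoff_eventuallyEq (h₁ : δ < ‖z‖) (h₂ : ‖z‖ < ε) :
    logCutoff δ ε =ᶠ[𝓝 z] fun w => (Real.log ε - Real.log ‖w‖) / (Real.log ε - Real.log δ) := by
  filter_upwards [(isOpen_Ioo.preimage continuous_norm).mem_nhds ⟨h₁, h₂⟩] with w ⟨hw₁, hw₂⟩
  rw [logCutoff, if_neg hw₁.not_ge, if_pos hw₂]

theorem abs_logCutoff_le_one (hδ : 0 < δ) (hδε : δ < ε) (z : ℂ) : |logCutoff δ ε z| ≤ 1 := by
  have hD : 0 < Real.log ε - Real.log δ := sub_pos.2 (Real.log_lt_log hδ hδε)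
  unfold logCutoff
  split_ifs with h₁ h₂
  · simp
  · have hz : 0 < ‖z‖ := hδ.trans (not_le.1 h₁)
    rw [abs_le, le_div_iff₀ hD, div_le_one hD]
    constructor
    · nlinarith [Real.log_le_log hz h₂.le]
    · linarith [Real.log_le_log hδ (not_le.1 h₁).le]
  · simp

theorem hasFDerivAt_logCutoff (hδ : 0 ≤ δ) (h₁ : δ < ‖z‖) (h₂ : ‖z‖ < ε) :
    HasFDerivAt (logCutoff δ ε)
      (-(Real.log ε - Real.log δ)⁻¹ • fderiv ℝ (fun w => Real.log ‖w‖) z) z := by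
  have hz : z ≠ 0 := norm_pos_iff.1 (hδ.trans_lt h₁)
  have h := ((hasFDerivAt_log_norm hz).differentiableAt.hasFDerivAt.const_sub
    (Real.log ε)).const_smul (Real.log ε - Real.log δ)⁻¹
  rw [smul_neg, ← neg_smul] at h
  refine h.congr_of_eventuallyEq ((logCutoff_eventuallyEq h₁ h₂).trans ?_)
  filter_upwards with w
  simp only [Pi.smul_apply, smul_eq_mul, div_eq_inv_mul]

theorem norm_fderiv_logCutoff_le (hδ : 0 < δ) (h₁ : δ < ‖z‖) (h₂ : ‖z‖ < ε) :
    ‖fderiv ℝ (logCutoff δ ε) z‖ ≤ (‖z‖ * (Real.log ε - Real.log δ))⁻¹ := by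
  have hz : z ≠ 0 := norm_pos_iff.1 (hδ.trans h₁)
  have hD : 0 < Real.log ε - Real.log δ := sub_pos.2 (Real.log_lt_log hδ (h₁.trans h₂))
  rw [(hasFDerivAt_logCutoff hδ.le h₁ h₂).fderiv, norm_smul, norm_neg, norm_inv,
    Real.norm_of_nonneg hD.le, mul_inv, mul_comm]
  gcongr
  exact norm_fderiv_log_norm_le hz

end LogCutoff

section Inversion

variable {F : Type*} [NormedAddCommGroup F] [NormedSpace ℝ F] {c z : ℂ}

theorem differentiableAt_const_div (hz : z ≠ 0) :
    DifferentiableAt ℝ (fun w : ℂ => c / w) z :=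
  ((differentiableAt_const c).div differentiableAt_id hz).restrictScalars ℝ (𝕜' := ℂ)

theorem norm_fderiv_const_div (hz : z ≠ 0) :
    ‖fderiv ℝ (fun w : ℂ => c / w) z‖ = ‖c‖ / ‖z‖ ^ 2 := by
  have hd : DifferentiableAt ℂ (fun w : ℂ => c / w) z := (differentiableAt_inv hz).const_mul c
  rw [hd.fderiv_restrictScalars ℝ, ContinuousLinearMap.norm_restrictScalars,
    ← norm_deriv_eq_norm_fderiv]
  simp [div_eq_mul_inv]

theorem norm_fderiv_comp_const_div_le {u : ℂ → F} {C : ℝ} (hz : z ≠ 0)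
    (hu : DifferentiableAt ℝ u (c / z)) (hC : ‖fderiv ℝ u (c / z)‖ ≤ C) :
    ‖fderiv ℝ (fun w => u (c / w)) z‖ ≤ C * (‖c‖ / ‖z‖ ^ 2) := by
  rw [← Function.comp_def, fderiv_comp z hu (differentiableAt_const_div hz),
    ← norm_fderiv_const_div hz]
  exact (ContinuousLinearMap.opNorm_comp_le _ _).trans (by gcongr)

theorem norm_fderiv_logCutoff_smul_comp_const_div_le {u : ℂ → F} {C δ ε : ℝ}
    (hu : Differentiable ℝ u) (hu0 : u 0 = 0) (hdu : ∀ w, ‖fderiv ℝ u w‖ ≤ C)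
    (hδ : 0 < δ) (h₁ : δ < ‖z‖) (h₂ : ‖z‖ < ε) :
    ‖fderiv ℝ (fun w => logCutoff δ ε w • u (c / w)) z‖ ≤
      C * (‖c‖ / ‖z‖ ^ 2) * ((Real.log ε - Real.log δ)⁻¹ + 1) := by
  have hz : 0 < ‖z‖ := hδ.trans h₁
  have hC : 0 ≤ C := (norm_nonneg _).trans (hdu 0)
  have hD : 0 < Real.log ε - Real.log δ := sub_pos.2 (Real.log_lt_log hδ (h₁.trans h₂))
  have hd : DifferentiableAt ℝ (fun w : ℂ => u (c / w)) z :=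
    (hu _).comp z (differentiableAt_const_div (norm_pos_iff.1 hz))
  have hval : ‖u (c / z)‖ ≤ C * (‖c‖ / ‖z‖) := by
    simpa using norm_le_mul_norm_of_norm_fderiv_le hu hu0 hdu (c / z)
  calc ‖fderiv ℝ (fun w => logCutoff δ ε w • u (c / w)) z‖
      ≤ |logCutoff δ ε z| * ‖fderiv ℝ (fun w => u (c / w)) z‖
          + ‖fderiv ℝ (logCutoff δ ε) z‖ * ‖u (c / z)‖ :=
        norm_fderiv_smul_le (hasFDerivAt_logCutoff hδ.le h₁ h₂).differentiableAt hd
    _ ≤ 1 * (C * (‖c‖ / ‖z‖ ^ 2))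
          + (‖z‖ * (Real.log ε - Real.log δ))⁻¹ * (C * (‖c‖ / ‖z‖)) := by
        gcongr
        · exact abs_logCutoff_le_one hδ (h₁.trans h₂) z
        · exact norm_fderiv_comp_const_div_le (norm_pos_iff.1 hz) (hu _) (hdu _)
        · exact norm_fderiv_logCutoff_le hδ h₁ h₂
    _ = C * (‖c‖ / ‖z‖ ^ 2) * ((Real.log ε - Real.log δ)⁻¹ + 1) := by
        field_simp
        ring

end Inversion

theorem sq_div_sq_le_rpow {r a α : ℝ} (hr : 0 < r) (ha : r ^ α < a) :
    r ^ 2 / a ^ 2 ≤ r ^ (2 - 2 * α) := by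
  have hpow : r ^ (2 - 2 * α) = r ^ 2 / (r ^ α) ^ 2 := by
    rw [Real.rpow_sub hr, ← Real.rpow_natCast, ← Real.rpow_natCast, ← Real.rpow_mul hr.le]
    norm_num [mul_comm]
  rw [hpow]
  gcongr

theorem stmt8_general (n : ℕ) (u1 : ℂ → EuclideanSpace ℝ (Fin n)) (C C' : ℝ) (hC : 0 < C)
    (hdiff : Differentiable ℝ u1)
    (hu1 : ∀ w : ℂ, ‖u1 w‖ ≤ C * ‖w‖ + C' * ‖w‖ ^ 2)
    (hdu1 : ∀ w : ℂ, ‖fderiv ℝ u1 w‖ ≤ C)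
    (α γ : ℝ) (hγα : γ < α) :
    ∃ r₀ ∈ Set.Ioo (0 : ℝ) 1, ∀ r : ℝ, 0 < r → r < r₀ →
      ∀ z : ℂ, r ^ α < ‖z‖ → ‖z‖ < r ^ γ →
        ‖fderiv ℝ (fun w : ℂ => logCutoff (r ^ α) (r ^ γ) w • u1 ((r : ℂ) ^ 2 / w)) z‖
          ≤ C * r ^ (2 - 2 * α) * (|Real.log (r ^ (α - γ))|⁻¹ + 1) := by
  refine ⟨1 / 2, by norm_num, fun r hr hr₀ z hz₁ hz₂ => ?_⟩
  have hlog : |Real.log (r ^ (α - γ))| = Real.log (r ^ γ) - Real.log (r ^ α) := by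
    rw [Real.log_rpow hr, Real.log_rpow hr, Real.log_rpow hr, abs_of_neg
      (mul_neg_of_pos_of_neg (sub_pos.2 hγα) (Real.log_neg hr (by linarith)))]
    ring
  have hu0 : u1 0 = 0 := norm_le_zero_iff.1 (by simpa using hu1 0)
  have hD : 0 < Real.log (r ^ γ) - Real.log (r ^ α) :=
    sub_pos.2 (Real.log_lt_log (by positivity)
      (Real.rpow_lt_rpow_of_exponent_gt hr (by linarith) hγα))
  have hc : ‖(r : ℂ) ^ 2‖ = r ^ 2 := by simp [abs_of_pos hr]
  calc _ ≤ C * (r ^ 2 / ‖z‖ ^ 2) * ((Real.log (r ^ γ) - Real.log (r ^ α))⁻¹ + 1) := by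
        rw [← hc]
        exact norm_fderiv_logCutoff_smul_comp_const_div_le hdiff hu0 hdu1 (by positivity) hz₁ hz₂
    _ ≤ C * r ^ (2 - 2 * α) * (|Real.log (r ^ (α - γ))|⁻¹ + 1) := by
        rw [hlog]
        gcongr
        exact sq_div_sq_le_rpow hr hz₁

/-- `C⁰` estimate for the differential of `w_r(z) = β_{r^α,r^γ}(z) · u¹(r²/z)` on the
annulus `r^α < |z| < r^γ`: it is bounded by `C r^{2−2α} (|log r^{α−γ}|⁻¹ + 1)` for small `r`. -/
theorem stmt8 (n : ℕ) (u1 : ℂ → EuclideanSpace ℝ (Fin n)) (C C' : ℝ) (hC : 0 < C)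
    (hC' : 0 ≤ C') (hdiff : Differentiable ℝ u1)
    (hu1 : ∀ w : ℂ, ‖u1 w‖ ≤ C * ‖w‖ + C' * ‖w‖ ^ 2)
    (hdu1 : ∀ w : ℂ, ‖fderiv ℝ u1 w‖ ≤ C)
    (α γ : ℝ) (hγ : 0 < γ) (hγα : γ < α) (hα : α < 1) :
    ∃ r₀ ∈ Set.Ioo (0 : ℝ) 1, ∀ r : ℝ, 0 < r → r < r₀ →
      ∀ z : ℂ, r ^ α < ‖z‖ → ‖z‖ < r ^ γ →
        ‖fderiv ℝ (fun w : ℂ => logCutoff (r ^ α) (r ^ γ) w • u1 ((r : ℂ) ^ 2 / w)) z‖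
          ≤ C * r ^ (2 - 2 * α) * (|Real.log (r ^ (α - γ))|⁻¹ + 1) :=
  stmt8_general n u1 C C' hC hdiff hu1 hdu1 α γ hγα
end

section
/- Let X, Y be Banach spaces, f : U → Y a C¹ map on an open neighborhood U of x₀ ∈ X, D = df(x₀), and Q : Y → X a bounded right inverse of D (D Q = Id, ‖Q‖ ≤ c). Suppose there is δ > 0 with B(x₀, δ) ⊂ U and ‖df(x) − D‖ ≤ 1/(2c) for all x with ‖x − x₀‖ ≤ δ. If ‖f(x₀)‖ ≤ δ/(4c), then there exists x with f(x) = 0, ‖x − x₀‖ ≤ 2c‖f(x₀)‖ ≤ δ/2, and x − x₀ ∈ im Q; moreover such x is unique among points of the form x₀ + Qξ with ‖x − x₀‖ ≤ δ. -/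
/-!
In the coordinates `x = x₀ + Q ξ`, zeros of `f` are the fixed points of the Newton step with
frozen derivative, `ξ ↦ ξ - f (x₀ + Q ξ)`. Since `D (Q (a - b)) = a - b`, the mean value
inequality applied to `f - D` on the `δ`-ball makes this map `1/2`-Lipschitz wherever
`x₀ + Q ξ` stays in the ball. Hence it maps the ball of radius `2 ‖f x₀‖` into itself, and
Banach's fixed point theorem gives the zero; the same contraction estimate gives uniqueness.
-/

open Set Metric Function
open scoped NNReal

theorem LipschitzOnWith.mapsTo_closedBall {α : Type*} [PseudoMetricSpace α] {g : α → α}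
    {K : ℝ≥0} {x : α} {r : ℝ} (hg : LipschitzOnWith K g (closedBall x r))
    (hx : dist (g x) x ≤ (1 - K) * r) : MapsTo g (closedBall x r) (closedBall x r) := by
  intro y hy
  have hr : 0 ≤ r := dist_nonneg.trans hy
  calc dist (g y) x ≤ dist (g y) (g x) + dist (g x) x := dist_triangle _ _ _
    _ ≤ K * dist y x + (1 - K) * r := by
        gcongr; exact hg.dist_le_mul y hy x (mem_closedBall_self hr)
    _ ≤ K * r + (1 - K) * r := by gcongr; exact hy
    _ = r := by ring

theorem LipschitzOnWith.exists_isFixedPt_mem_closedBall {α : Type*} [MetricSpace α]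
    [CompleteSpace α] {g : α → α} {K : ℝ≥0} {x : α} {r : ℝ}
    (hg : LipschitzOnWith K g (closedBall x r)) (hK : K < 1) (hx : dist (g x) x ≤ (1 - K) * r) :
    ∃ y ∈ closedBall x r, IsFixedPt g y := by
  have hr : 0 ≤ r :=
    (mul_nonneg_iff_of_pos_left (sub_pos.2 (NNReal.coe_lt_one.2 hK))).1 (dist_nonneg.trans hx)
  have hmaps := hg.mapsTo_closedBall hx
  obtain ⟨y, hy, hfix, -⟩ := ContractingWith.exists_fixedPoint' isClosed_closedBall.isComplete
    hmaps ⟨hK, hg.mapsToRestrict hmaps⟩ (mem_closedBall_self hr) (edist_ne_top _ _)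
  exact ⟨y, hy, hfix⟩

section NewtonPicard

variable {X Y : Type*} [NormedAddCommGroup X] [NormedSpace ℝ X]
  [NormedAddCommGroup Y] [NormedSpace ℝ Y]

def newtonPicardMap (f : X → Y) (x₀ : X) (Q : Y →L[ℝ] X) (ξ : Y) : Y :=
  ξ - f (x₀ + Q ξ)

theorem isFixedPt_newtonPicardMap_iff {f : X → Y} {x₀ : X} {Q : Y →L[ℝ] X} {ξ : Y} :
    IsFixedPt (newtonPicardMap f x₀ Q) ξ ↔ f (x₀ + Q ξ) = 0 :=
  sub_eq_self

theorem newtonPicardMap_zero (f : X → Y) (x₀ : X) (Q : Y →L[ℝ] X) :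
    newtonPicardMap f x₀ Q 0 = -f x₀ := by
  simp [newtonPicardMap]

theorem norm_newtonPicardMap_sub_le {f : X → Y} {x₀ : X} {Q : Y →L[ℝ] X} {D : X →L[ℝ] Y}
    (hDQ : D.comp Q = ContinuousLinearMap.id ℝ Y) {s : Set X} (hs : Convex ℝ s)
    (hf : ∀ x ∈ s, DifferentiableAt ℝ f x) {C : ℝ} (hder : ∀ x ∈ s, ‖fderiv ℝ f x - D‖ ≤ C)
    {a b : Y} (ha : x₀ + Q a ∈ s) (hb : x₀ + Q b ∈ s) :
    ‖newtonPicardMap f x₀ Q a - newtonPicardMap f x₀ Q b‖ ≤ C * ‖Q‖ * ‖a - b‖ := by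
  have hC : 0 ≤ C := (norm_nonneg _).trans (hder _ ha)
  have hDQab : D (Q (a - b)) = a - b := DFunLike.congr_fun hDQ (a - b)
  have hsub : newtonPicardMap f x₀ Q a - newtonPicardMap f x₀ Q b =
      -(f (x₀ + Q a) - f (x₀ + Q b) - D ((x₀ + Q a) - (x₀ + Q b))) := by
    rw [add_sub_add_left_eq_sub, ← map_sub, hDQab, newtonPicardMap, newtonPicardMap]
    abel
  calc ‖newtonPicardMap f x₀ Q a - newtonPicardMap f x₀ Q b‖
      = ‖f (x₀ + Q a) - f (x₀ + Q b) - D ((x₀ + Q a) - (x₀ + Q b))‖ := by rw [hsub, norm_neg]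
    _ ≤ C * ‖(x₀ + Q a) - (x₀ + Q b)‖ := hs.norm_image_sub_le_of_norm_fderiv_le' hf hder hb ha
    _ = C * ‖Q (a - b)‖ := by rw [add_sub_add_left_eq_sub, map_sub]
    _ ≤ C * (‖Q‖ * ‖a - b‖) := by gcongr; exact Q.le_opNorm _
    _ = C * ‖Q‖ * ‖a - b‖ := (mul_assoc _ _ _).symm

theorem norm_newtonPicardMap_sub_le_half {U : Set X} (hU : IsOpen U) {f : X → Y}
    (hf : ContDiffOn ℝ 1 f U) {x₀ : X} {δ : ℝ} (hball : closedBall x₀ δ ⊆ U) {D : X →L[ℝ] Y}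
    {Q : Y →L[ℝ] X} (hDQ : D.comp Q = ContinuousLinearMap.id ℝ Y) {c : ℝ} (hc : 0 < c)
    (hQ : ‖Q‖ ≤ c) (hder : ∀ x : X, ‖x - x₀‖ ≤ δ → ‖fderiv ℝ f x - D‖ ≤ 1 / (2 * c))
    {a b : Y} (ha : ‖Q a‖ ≤ δ) (hb : ‖Q b‖ ≤ δ) :
    ‖newtonPicardMap f x₀ Q a - newtonPicardMap f x₀ Q b‖ ≤ 2⁻¹ * ‖a - b‖ := by
  have hdiff : ∀ x ∈ closedBall x₀ δ, DifferentiableAt ℝ f x := fun x hx =>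
    (hf.differentiableOn one_ne_zero x (hball hx)).differentiableAt (hU.mem_nhds (hball hx))
  calc ‖newtonPicardMap f x₀ Q a - newtonPicardMap f x₀ Q b‖
      ≤ 1 / (2 * c) * ‖Q‖ * ‖a - b‖ :=
        norm_newtonPicardMap_sub_le hDQ (convex_closedBall x₀ δ) hdiff
          (fun x hx => hder x (mem_closedBall_iff_norm.1 hx))
          (by rwa [mem_closedBall_iff_norm, add_sub_cancel_left])
          (by rwa [mem_closedBall_iff_norm, add_sub_cancel_left])
    _ ≤ 1 / (2 * c) * c * ‖a - b‖ := by gcongr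
    _ = 2⁻¹ * ‖a - b‖ := by field_simp

end NewtonPicard

theorem stmt9_general {X Y : Type*}
    [NormedAddCommGroup X] [NormedSpace ℝ X]
    [NormedAddCommGroup Y] [NormedSpace ℝ Y] [CompleteSpace Y]
    (U : Set X) (hU : IsOpen U) (x₀ : X)
    (f : X → Y) (hf : ContDiffOn ℝ 1 f U)
    (D : X →L[ℝ] Y)
    (Q : Y →L[ℝ] X) (c : ℝ) (hc : 0 < c)
    (hDQ : D.comp Q = ContinuousLinearMap.id ℝ Y) (hQ : ‖Q‖ ≤ c)
    (δ : ℝ) (hball : Metric.closedBall x₀ δ ⊆ U)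
    (hder : ∀ x : X, ‖x - x₀‖ ≤ δ → ‖fderiv ℝ f x - D‖ ≤ 1 / (2 * c))
    (hf0 : ‖f x₀‖ ≤ δ / (4 * c)) :
    ∃ x : X, f x = 0 ∧ ‖x - x₀‖ ≤ 2 * c * ‖f x₀‖ ∧ 2 * c * ‖f x₀‖ ≤ δ / 2 ∧
      (x - x₀) ∈ Set.range Q ∧
      ∀ x' : X, (x' - x₀) ∈ Set.range Q → f x' = 0 → ‖x' - x₀‖ ≤ δ → x' = x := by
  set Φ := newtonPicardMap f x₀ Q
  have hcontract : ∀ a b, ‖Q a‖ ≤ δ → ‖Q b‖ ≤ δ → ‖Φ a - Φ b‖ ≤ 2⁻¹ * ‖a - b‖ :=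
    fun _ _ => norm_newtonPicardMap_sub_le_half hU hf hball hDQ hc hQ hder
  have hfδ : 2 * c * ‖f x₀‖ ≤ δ / 2 := by
    rw [le_div_iff₀ (by positivity : (0 : ℝ) < 4 * c)] at hf0; linarith
  have hδ : 2 * c * ‖f x₀‖ ≤ δ := by linarith [show 0 ≤ 2 * c * ‖f x₀‖ by positivity]
  have hsmall : ∀ ξ ∈ closedBall (0 : Y) (2 * ‖f x₀‖), ‖Q ξ‖ ≤ 2 * c * ‖f x₀‖ := fun ξ hξ =>
    (Q.le_opNorm ξ).trans <| by
      rw [mul_comm 2 c, mul_assoc]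
      exact mul_le_mul hQ (mem_closedBall_zero_iff.1 hξ) (norm_nonneg _) hc.le
  have hlip : LipschitzOnWith 2⁻¹ Φ (closedBall 0 (2 * ‖f x₀‖)) :=
    LipschitzOnWith.of_dist_le_mul fun a ha b hb => by
      simpa [dist_eq_norm] using
        hcontract a b ((hsmall a ha).trans hδ) ((hsmall b hb).trans hδ)
  obtain ⟨ξ, hξ, hfix⟩ := hlip.exists_isFixedPt_mem_closedBall (by norm_num) (by
    rw [dist_zero_right, show Φ 0 = -f x₀ from newtonPicardMap_zero f x₀ Q, norm_neg]
    norm_num; linarith)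
  refine ⟨x₀ + Q ξ, isFixedPt_newtonPicardMap_iff.1 hfix, ?_, hfδ, ⟨ξ, by simp⟩, ?_⟩
  · simpa using hsmall ξ hξ
  rintro x' ⟨ξ', hξ'⟩ hx' hx'δ
  obtain rfl : x' = x₀ + Q ξ' := eq_add_of_sub_eq' hξ'.symm
  rw [add_sub_cancel_left] at hx'δ
  have hfix' : Φ ξ' = ξ' := isFixedPt_newtonPicardMap_iff.2 hx'
  have hξ'ξ := hcontract ξ' ξ hx'δ ((hsmall ξ hξ).trans hδ)
  rw [hfix', show Φ ξ = ξ from hfix] at hξ'ξ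
  have hle : ‖ξ' - ξ‖ ≤ 0 := by linarith [norm_nonneg (ξ' - ξ)]
  rw [sub_eq_zero.1 (norm_le_zero_iff.1 hle)]

/-- Quantitative implicit function theorem (Newton–Picard form): if `D = df(x₀)` has a bounded
right inverse `Q` with `‖Q‖ ≤ c`, `‖df(x) − D‖ ≤ 1/(2c)` on the `δ`-ball, and
`‖f(x₀)‖ ≤ δ/(4c)`, then there is a zero `x` of `f` with `‖x − x₀‖ ≤ 2c‖f(x₀)‖ ≤ δ/2` and
`x − x₀ ∈ im Q`, unique among such points within distance `δ`. -/
theorem stmt9 {X Y : Type*}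
    [NormedAddCommGroup X] [NormedSpace ℝ X] [CompleteSpace X]
    [NormedAddCommGroup Y] [NormedSpace ℝ Y] [CompleteSpace Y]
    (U : Set X) (hU : IsOpen U) (x₀ : X) (hx₀ : x₀ ∈ U)
    (f : X → Y) (hf : ContDiffOn ℝ 1 f U)
    (D : X →L[ℝ] Y) (hD : D = fderiv ℝ f x₀)
    (Q : Y →L[ℝ] X) (c : ℝ) (hc : 0 < c)
    (hDQ : D.comp Q = ContinuousLinearMap.id ℝ Y) (hQ : ‖Q‖ ≤ c)
    (δ : ℝ) (hδ : 0 < δ) (hball : Metric.closedBall x₀ δ ⊆ U)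
    (hder : ∀ x : X, ‖x - x₀‖ ≤ δ → ‖fderiv ℝ f x - D‖ ≤ 1 / (2 * c))
    (hf0 : ‖f x₀‖ ≤ δ / (4 * c)) :
    ∃ x : X, f x = 0 ∧ ‖x - x₀‖ ≤ 2 * c * ‖f x₀‖ ∧ 2 * c * ‖f x₀‖ ≤ δ / 2 ∧
      (x - x₀) ∈ Set.range Q ∧
      ∀ x' : X, (x' - x₀) ∈ Set.range Q → f x' = 0 → ‖x' - x₀‖ ≤ δ → x' = x :=
  stmt9_general U hU x₀ f hf D Q c hc hDQ hQ δ hball hder hf0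
end
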